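/- arXiv:1201.3704 — 2 statements merged into one kernel-verified Lean document; each statement's English description precedes it below -/
import Mathlib

section
/- Assume the Popov matrix Π = [[Q, S],[Sᵀ, R]] is positive semidefinite. If X is a symmetric solution of CGDARE(Σ), then ker R_X = ker (X B) ∩ ker R; that is, for v ∈ ℝ^m one has R_X v = 0 if and only if X B v = 0 and R v = 0. -/
/-!
With the gain `K = (S_X R_X†)ᵀ` the kernel condition gives `S_X = Kᵀ R_X`, and the Riccati
equation turns into the Stein equation `X = Tᵀ X T + Eᵀ Π E` for the closed loop `T = A - B K`,
`E = [I; -K]`. For `v ∈ ker R_X`, the vector `u = B v` then satisfies `Tᵀ X u = -Eᵀ Π w` and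
`uᵀ X u = -wᵀ Π w` with `w = (0, v)`.

By Cayley–Hamilton there is a Horner sequence `z i = T z (i+1) + c i • u` running from
`z 0 = 0` through `z N = u` to `z (N+1) = 0`. Along it the energy `zᵀ X z` grows at each step by
the `Π`-norm of `E z (i+1) + c i • w`, so, starting and ending at `0`, every increment vanishes.
As `Π ≥ 0`, this makes `X z (i+1) = Tᵀ X z i` exact, hence `X z i = 0` for all `i`, and in
particular `X B v = X u = 0`; finally `R v = R_X v - Bᵀ X B v = 0`.
-/

open Matrix Polynomial

namespace Polynomial

variable {R : Type*} [Semiring R]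

theorem coeff_iterate_divX (p : R[X]) (i j : ℕ) : (divX^[i] p).coeff j = p.coeff (j + i) := by
  induction i generalizing j with
  | zero => rfl
  | succ i ih => rw [Function.iterate_succ_apply', coeff_divX, ih, add_right_comm, add_assoc]

theorem iterate_divX_natDegree (p : R[X]) : divX^[p.natDegree] p = C p.leadingCoeff := by
  ext j
  rw [coeff_iterate_divX, coeff_C]
  split_ifs with hj
  · rw [hj, zero_add, leadingCoeff]
  · exact coeff_eq_zero_of_natDegree_lt (by omega)

theorem iterate_divX_natDegree_succ (p : R[X]) : divX^[p.natDegree + 1] p = 0 := by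
  rw [Function.iterate_succ_apply', iterate_divX_natDegree, divX_C]

end Polynomial

namespace Matrix

theorem exists_horner_sequence {R ι : Type*} [CommRing R] [Nontrivial R] [Fintype ι]
    [DecidableEq ι] (T : Matrix ι ι R) (u : ι → R) :
    ∃ (z : ℕ → ι → R) (c : ℕ → R) (N : ℕ),
      (∀ i, z i = T *ᵥ z (i + 1) + c i • u) ∧ z 0 = 0 ∧ z N = u ∧ z (N + 1) = 0 := by
  refine ⟨fun i ↦ aeval T (divX^[i] T.charpoly) *ᵥ u, T.charpoly.coeff, T.charpoly.natDegree,
    fun i ↦ ?_, ?_, ?_, ?_⟩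
  · beta_reduce
    rw [← X_mul_divX_add (divX^[i] T.charpoly), ← Function.iterate_succ_apply' divX]
    simp [coeff_iterate_divX, Algebra.algebraMap_eq_smul_one, add_mulVec, mulVec_mulVec,
      smul_mulVec]
  · simp [aeval_self_charpoly]
  · beta_reduce
    rw [iterate_divX_natDegree, (charpoly_monic T).leadingCoeff]
    simp
  · simp only [iterate_divX_natDegree_succ, map_zero, zero_mulVec]

section Bilinear

variable {α ι κ : Type*} [CommSemiring α] [Fintype ι] [Fintype κ]

theorem mulVec_dotProduct (M : Matrix κ ι α) (a : ι → α) (b : κ → α) :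
    (M *ᵥ a) ⬝ᵥ b = a ⬝ᵥ Mᵀ *ᵥ b := by
  rw [dotProduct_comm, dotProduct_transpose_mulVec]

theorem dotProduct_mulVec_comm {M : Matrix ι ι α} (hM : Mᵀ = M) (a b : ι → α) :
    a ⬝ᵥ M *ᵥ b = b ⬝ᵥ M *ᵥ a := by
  rw [← dotProduct_transpose_mulVec, hM]

end Bilinear

section Stein

variable {ι κ : Type*} [Fintype ι] [Fintype κ] {T X : Matrix ι ι ℝ} {E : Matrix κ ι ℝ}
  {P : Matrix κ κ ℝ} {u : ι → ℝ} {w : κ → ℝ}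

theorem stein_mulVec_eq (hStein : X = Tᵀ * X * T + Eᵀ * P * E)
    (hTXu : Tᵀ *ᵥ X *ᵥ u = -(Eᵀ *ᵥ P *ᵥ w)) (z : ι → ℝ) (α : ℝ) :
    X *ᵥ z = Tᵀ *ᵥ X *ᵥ (T *ᵥ z + α • u) + Eᵀ *ᵥ P *ᵥ (E *ᵥ z + α • w) := by
  conv_lhs => rw [hStein]
  simp only [add_mulVec, mulVec_add, mulVec_smul, hTXu, ← mulVec_mulVec]
  module

theorem stein_energy_eq (hX : Xᵀ = X) (hP : Pᵀ = P) (hStein : X = Tᵀ * X * T + Eᵀ * P * E)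
    (hTXu : Tᵀ *ᵥ X *ᵥ u = -(Eᵀ *ᵥ P *ᵥ w)) (huXu : u ⬝ᵥ X *ᵥ u = -(w ⬝ᵥ P *ᵥ w))
    (z : ι → ℝ) (α : ℝ) :
    (T *ᵥ z + α • u) ⬝ᵥ X *ᵥ (T *ᵥ z + α • u) + (E *ᵥ z + α • w) ⬝ᵥ P *ᵥ (E *ᵥ z + α • w) =
      z ⬝ᵥ X *ᵥ z := by
  have hquad : z ⬝ᵥ X *ᵥ z = (T *ᵥ z) ⬝ᵥ X *ᵥ T *ᵥ z + (E *ᵥ z) ⬝ᵥ P *ᵥ E *ᵥ z := by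
    conv_lhs => rw [hStein]
    simp only [add_mulVec, dotProduct_add, ← mulVec_mulVec, mulVec_dotProduct]
  have hcross : (T *ᵥ z) ⬝ᵥ X *ᵥ u = -((E *ᵥ z) ⬝ᵥ P *ᵥ w) := by
    rw [mulVec_dotProduct, hTXu, dotProduct_neg, mulVec_dotProduct]
  have hXsymm := dotProduct_mulVec_comm hX u (T *ᵥ z)
  have hPsymm := dotProduct_mulVec_comm hP w (E *ᵥ z)
  simp only [mulVec_add, add_dotProduct, dotProduct_add, mulVec_smul, smul_dotProduct,
    dotProduct_smul, smul_eq_mul]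
  linear_combination hquad.symm + (2 * α) * hcross + α * hXsymm + α * hPsymm + α ^ 2 * huXu

theorem mulVec_eq_zero_of_stein [DecidableEq ι] (hX : Xᵀ = X) (hP : P.PosSemidef)
    (hStein : X = Tᵀ * X * T + Eᵀ * P * E)
    (hTXu : Tᵀ *ᵥ X *ᵥ u = -(Eᵀ *ᵥ P *ᵥ w)) (huXu : u ⬝ᵥ X *ᵥ u = -(w ⬝ᵥ P *ᵥ w)) :
    X *ᵥ u = 0 := by
  obtain ⟨z, c, N, hz, hz0, hzN, hzN1⟩ := exists_horner_sequence T u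
  set r : ℕ → κ → ℝ := fun i ↦ E *ᵥ z (i + 1) + c i • w
  have hPt : Pᵀ = P := by simpa using hP.isHermitian.eq
  have henergy : ∀ k, ∑ i ∈ Finset.range k, r i ⬝ᵥ P *ᵥ r i = z k ⬝ᵥ X *ᵥ z k := by
    intro k
    induction k with
    | zero => simp [hz0]
    | succ k ih => rw [Finset.sum_range_succ, ih, hz k, stein_energy_eq hX hPt hStein hTXu huXu]
  have hr : ∀ i ≤ N, P *ᵥ r i = 0 := by
    have hsum := henergy (N + 1)
    rw [hzN1, mulVec_zero, dotProduct_zero] at hsum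
    intro i hi
    refine (hP.dotProduct_mulVec_zero_iff (r i)).mp ?_
    exact (Finset.sum_eq_zero_iff_of_nonneg fun j _ ↦ hP.dotProduct_mulVec_nonneg (r j)).mp
      hsum i (Finset.mem_range.mpr (by omega))
  have hXz : ∀ i ≤ N, X *ᵥ z i = 0 := by
    intro i
    induction i with
    | zero => simp [hz0]
    | succ i ih =>
      intro hi
      rw [stein_mulVec_eq hStein hTXu (z (i + 1)) (c i), ← hz i, ih (by omega), hr i (by omega)]
      simp
  rw [← hzN]
  exact hXz N le_rfl

end Stein

theorem mul_mul_eq_of_ker_le {𝕜 k l m : Type*} [CommRing 𝕜] [Fintype k] [Fintype l]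
    {M : Matrix k l 𝕜} {G : Matrix l k 𝕜} {N : Matrix m l 𝕜} (hG : M * G * M = M)
    (hker : ∀ v, M *ᵥ v = 0 → N *ᵥ v = 0) : N * G * M = N := by
  refine ext_iff_mulVec.mpr fun v ↦ ?_
  have hMv : M *ᵥ (v - (G * M) *ᵥ v) = 0 := by
    rw [mulVec_sub, mulVec_mulVec, ← Matrix.mul_assoc, hG, sub_self]
  rw [eq_comm, ← sub_eq_zero, Matrix.mul_assoc, ← mulVec_mulVec, ← mulVec_sub]
  exact hker _ hMv

section Riccati

variable {𝕜 m n : Type*} [CommRing 𝕜] [Fintype m] [Fintype n]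
  (A X Q : Matrix n n 𝕜) (B S : Matrix n m 𝕜) (R : Matrix m m 𝕜) (K : Matrix m n 𝕜)

theorem closedLoop_add_popov_eq [DecidableEq n] :
    (A - B * K)ᵀ * X * (A - B * K) +
        (fromRows (1 : Matrix n n 𝕜) (-K))ᵀ * fromBlocks Q S Sᵀ R *
          fromRows (1 : Matrix n n 𝕜) (-K) =
      Aᵀ * X * A + Q - (Aᵀ * X * B + S) * K - Kᵀ * (Bᵀ * X * A + Sᵀ) +
        Kᵀ * (R + Bᵀ * X * B) * K := by
  rw [transpose_fromRows, fromCols_mul_fromBlocks, fromCols_mul_fromRows]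
  simp only [transpose_sub, transpose_mul, transpose_one, transpose_neg, Matrix.mul_sub,
    Matrix.sub_mul, Matrix.mul_add, Matrix.add_mul, Matrix.mul_neg, Matrix.neg_mul,
    Matrix.mul_one, Matrix.one_mul, Matrix.mul_assoc]
  abel

theorem closedLoop_input_add_popov_eq [DecidableEq n] [DecidableEq m] :
    (A - B * K)ᵀ * X * B + (fromRows (1 : Matrix n n 𝕜) (-K))ᵀ * fromBlocks Q S Sᵀ R *
        fromRows (0 : Matrix n m 𝕜) (1 : Matrix m m 𝕜) =
      Aᵀ * X * B + S - Kᵀ * (R + Bᵀ * X * B) := by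
  rw [transpose_fromRows, fromCols_mul_fromBlocks, fromCols_mul_fromRows]
  simp only [transpose_sub, transpose_mul, transpose_one, transpose_neg, Matrix.sub_mul,
    Matrix.mul_add, Matrix.neg_mul, Matrix.mul_one, Matrix.one_mul, Matrix.mul_zero,
    Matrix.mul_assoc]
  abel

theorem input_add_popov_eq [DecidableEq m] :
    Bᵀ * X * B + (fromRows (0 : Matrix n m 𝕜) (1 : Matrix m m 𝕜))ᵀ * fromBlocks Q S Sᵀ R *
        fromRows (0 : Matrix n m 𝕜) (1 : Matrix m m 𝕜) =
      R + Bᵀ * X * B := by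
  rw [transpose_fromRows, fromCols_mul_fromBlocks, fromCols_mul_fromRows]
  simp only [transpose_one, transpose_zero, Matrix.mul_one, Matrix.one_mul, Matrix.mul_zero,
    Matrix.zero_mul, add_zero, add_comm]

variable {A X Q B S R K}

theorem stein_of_riccati [DecidableEq n] {G : Matrix m m 𝕜} (hX : Xᵀ = X) (hR : Rᵀ = R)
    (hG : (R + Bᵀ * X * B) * G * (R + Bᵀ * X * B) = R + Bᵀ * X * B)
    (hK : Aᵀ * X * B + S = Kᵀ * (R + Bᵀ * X * B))
    (hRic : X = Aᵀ * X * A - (Aᵀ * X * B + S) * G * (Aᵀ * X * B + S)ᵀ + Q) :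
    X = (A - B * K)ᵀ * X * (A - B * K) +
      (fromRows (1 : Matrix n n 𝕜) (-K))ᵀ * fromBlocks Q S Sᵀ R *
        fromRows (1 : Matrix n n 𝕜) (-K) := by
  have hRX : (R + Bᵀ * X * B)ᵀ = R + Bᵀ * X * B := by
    simp only [transpose_add, transpose_mul, transpose_transpose, hR, hX, Matrix.mul_assoc]
  have hKt : Bᵀ * X * A + Sᵀ = (R + Bᵀ * X * B) * K := by
    rw [← hRX, ← transpose_transpose K, ← transpose_mul, ← hK]
    simp only [transpose_add, transpose_mul, transpose_transpose, hX, Matrix.mul_assoc]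
  have hSGS : (Aᵀ * X * B + S) * G * (Aᵀ * X * B + S)ᵀ = Kᵀ * (R + Bᵀ * X * B) * K :=
    calc _ = Kᵀ * ((R + Bᵀ * X * B) * G * (R + Bᵀ * X * B)) * K := by
          rw [hK, transpose_mul, hRX, transpose_transpose]
          simp only [Matrix.mul_assoc]
      _ = _ := by rw [hG]
  rw [closedLoop_add_popov_eq, hK, hKt]
  conv_lhs => rw [hRic, hSGS]
  simp only [Matrix.mul_assoc]
  abel

variable {v : m → 𝕜}

theorem closedLoop_mulVec_of_mem_ker [DecidableEq n] [DecidableEq m]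
    (hS : (Aᵀ * X * B + S) *ᵥ v = 0) (hRv : (R + Bᵀ * X * B) *ᵥ v = 0) :
    (A - B * K)ᵀ *ᵥ X *ᵥ B *ᵥ v =
      -((fromRows (1 : Matrix n n 𝕜) (-K))ᵀ *ᵥ fromBlocks Q S Sᵀ R *ᵥ
        fromRows (0 : Matrix n m 𝕜) (1 : Matrix m m 𝕜) *ᵥ v) := by
  have h := congrArg (· *ᵥ v) (closedLoop_input_add_popov_eq A X Q B S R K)
  simp only [add_mulVec, sub_mulVec, ← mulVec_mulVec, hS, hRv, mulVec_zero, sub_zero] at h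
  exact eq_neg_of_add_eq_zero_left h

theorem input_dotProduct_of_mem_ker [DecidableEq m] (hRv : (R + Bᵀ * X * B) *ᵥ v = 0) :
    (B *ᵥ v) ⬝ᵥ X *ᵥ B *ᵥ v =
      -((fromRows (0 : Matrix n m 𝕜) (1 : Matrix m m 𝕜) *ᵥ v) ⬝ᵥ fromBlocks Q S Sᵀ R *ᵥ
        fromRows (0 : Matrix n m 𝕜) (1 : Matrix m m 𝕜) *ᵥ v) := by
  have h := congrArg (fun M ↦ v ⬝ᵥ M *ᵥ v) (input_add_popov_eq X Q B S R)
  simp only [add_mulVec, dotProduct_add, ← mulVec_mulVec, hRv, dotProduct_zero,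
    ← mulVec_dotProduct] at h
  exact eq_neg_of_add_eq_zero_left h

end Riccati

end Matrix

theorem stmt_14_general (n m : ℕ)
    (A : Matrix (Fin n) (Fin n) ℝ) (B : Matrix (Fin n) (Fin m) ℝ)
    (Q : Matrix (Fin n) (Fin n) ℝ) (S : Matrix (Fin n) (Fin m) ℝ)
    (R : Matrix (Fin m) (Fin m) ℝ)
    (hR : Rᵀ = R)
    (hPi : (Matrix.fromBlocks Q S Sᵀ R).PosSemidef)
    (X : Matrix (Fin n) (Fin n) ℝ) (hX : Xᵀ = X)
    (RXd : Matrix (Fin m) (Fin m) ℝ)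
    (pen1 : (R + Bᵀ * X * B) * RXd * (R + Bᵀ * X * B) = R + Bᵀ * X * B)
    (hGDARE : X = Aᵀ * X * A - (Aᵀ * X * B + S) * RXd * (Aᵀ * X * B + S)ᵀ + Q)
    (hker : ∀ v : Fin m → ℝ, (R + Bᵀ * X * B).mulVec v = 0 → (Aᵀ * X * B + S).mulVec v = 0) :
    ∀ v : Fin m → ℝ,
      (R + Bᵀ * X * B).mulVec v = 0 ↔ ((X * B).mulVec v = 0 ∧ R.mulVec v = 0) := by
  intro v
  refine ⟨fun hv ↦ ?_, fun ⟨hXB, hRv⟩ ↦ ?_⟩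
  · set K := ((Aᵀ * X * B + S) * RXd)ᵀ
    have hK : Aᵀ * X * B + S = Kᵀ * (R + Bᵀ * X * B) := by
      rw [transpose_transpose, mul_mul_eq_of_ker_le pen1 hker]
    have hXBv : X *ᵥ B *ᵥ v = 0 :=
      mulVec_eq_zero_of_stein hX hPi (stein_of_riccati hX hR pen1 hK hGDARE)
        (closedLoop_mulVec_of_mem_ker (hker v hv) hv) (input_dotProduct_of_mem_ker hv)
    refine ⟨by rwa [← mulVec_mulVec], ?_⟩
    rwa [add_mulVec, ← mulVec_mulVec, ← mulVec_mulVec, hXBv, mulVec_zero, add_zero] at hv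
  · rw [add_mulVec, hRv, Matrix.mul_assoc, ← mulVec_mulVec, hXB, mulVec_zero, zero_add]

theorem stmt_14 (n m : ℕ)
    (A : Matrix (Fin n) (Fin n) ℝ) (B : Matrix (Fin n) (Fin m) ℝ)
    (Q : Matrix (Fin n) (Fin n) ℝ) (S : Matrix (Fin n) (Fin m) ℝ)
    (R : Matrix (Fin m) (Fin m) ℝ)
    (hQ : Qᵀ = Q) (hR : Rᵀ = R)
    (hPi : (Matrix.fromBlocks Q S Sᵀ R).PosSemidef)
    (X : Matrix (Fin n) (Fin n) ℝ) (hX : Xᵀ = X)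
    (RXd : Matrix (Fin m) (Fin m) ℝ)
    (pen1 : (R + Bᵀ * X * B) * RXd * (R + Bᵀ * X * B) = R + Bᵀ * X * B)
    (pen2 : RXd * (R + Bᵀ * X * B) * RXd = RXd)
    (pen3 : ((R + Bᵀ * X * B) * RXd)ᵀ = (R + Bᵀ * X * B) * RXd)
    (pen4 : (RXd * (R + Bᵀ * X * B))ᵀ = RXd * (R + Bᵀ * X * B))
    (hGDARE : X = Aᵀ * X * A - (Aᵀ * X * B + S) * RXd * (Aᵀ * X * B + S)ᵀ + Q)
    (hker : ∀ v : Fin m → ℝ, (R + Bᵀ * X * B).mulVec v = 0 → (Aᵀ * X * B + S).mulVec v = 0) :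
    ∀ v : Fin m → ℝ,
      (R + Bᵀ * X * B).mulVec v = 0 ↔ ((X * B).mulVec v = 0 ∧ R.mulVec v = 0) :=
  stmt_14_general n m A B Q S R hR hPi X hX RXd pen1 hGDARE hker
end

section
/- Let X be a symmetric solution of CGDARE(Σ). Then for every nonzero z ∈ ℂ such that zI_n − A and z⁻¹I_n − Aᵀ are invertible (all real matrices viewed as complex matrices via entrywise coercion), the Popov function admits the square spectral factorization [Bᵀ(z⁻¹I_n − Aᵀ)⁻¹ I_m] · Π · [(zI_n − A)⁻¹B ; I_m] = (I_m + Bᵀ(z⁻¹I_n − Aᵀ)⁻¹ K_Xᵀ) · R_X · (I_m + K_X (zI_n − A)⁻¹ B). -/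
open Matrix

/-- Entrywise coercion of a real matrix to a complex matrix. -/
noncomputable def toC {k l : Type*} (M : Matrix k l ℝ) : Matrix k l ℂ :=
  M.map (algebraMap ℝ ℂ)

/-!
Write `L = z • 1 - A` and `M = z⁻¹ • 1 - Aᵀ`. The identity `X - AᵀXA = MXL + AᵀXL + MXA`,
sandwiched between `BᵀM⁻¹` and `L⁻¹B`, turns the Stein part `X - AᵀXA` of `Q` (read off the GDARE)
into `BᵀXB + BᵀM⁻¹AᵀXB + BᵀXAL⁻¹B`, so the Popov function equals
`R_X + BᵀM⁻¹S_X + S_XᵀL⁻¹B + BᵀM⁻¹S_X R_X† S_XᵀL⁻¹B`.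
Since `R_X` is symmetric, `R_X†ᵀ` is again an inner inverse of `R_X`, so `ker R_X ⊆ ker S_X` gives
`S_X R_X†ᵀ R_X = S_X`, i.e. `K_Xᵀ R_X = S_X` and `R_X K_X = S_Xᵀ`; with these the right-hand side
expands to the same four terms.
-/

theorem Matrix.mul_mul_eq_self_of_ker_le {R k l m : Type*} [Ring R] [Fintype l] [Fintype m]
    [DecidableEq m] {M : Matrix l m R} {P : Matrix m l R} {N : Matrix k m R}
    (hMPM : M * P * M = M) (hker : ∀ v, M *ᵥ v = 0 → N *ᵥ v = 0) : N * (P * M) = N := by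
  refine ext_of_mulVec_single fun j => ?_
  have hM : M *ᵥ (Pi.single j 1 - (P * M) *ᵥ Pi.single j 1) = 0 := by
    rw [mulVec_sub, mulVec_mulVec, ← Matrix.mul_assoc, hMPM, sub_self]
  rw [← mulVec_mulVec, eq_comm, ← sub_eq_zero, ← mulVec_sub]
  exact hker _ hM

section PopovFunction

variable {𝕜 n m p : Type*} [Field 𝕜] [Fintype n] [DecidableEq n] [Fintype m] [DecidableEq m]
  [Fintype p] [DecidableEq p]

theorem sub_mul_mul_eq_resolvent_expansion {z : 𝕜} (hz : z ≠ 0) (C : Matrix n n 𝕜)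
    (X : Matrix n p 𝕜) (A : Matrix p p 𝕜) :
    X - C * X * A = (z⁻¹ • 1 - C) * X * (z • 1 - A) + C * X * (z • 1 - A)
      + (z⁻¹ • 1 - C) * X * A := by
  simp only [Matrix.mul_sub, Matrix.sub_mul, Matrix.mul_smul, Matrix.smul_mul, Matrix.one_mul,
    Matrix.mul_one, smul_sub, smul_smul, mul_inv_cancel₀ hz, one_smul]
  abel

theorem mul_nonsing_inv_mul_sub_mul_mul_nonsing_inv {k q : Type*} {z : 𝕜} (hz : z ≠ 0)
    {C : Matrix n n 𝕜} {A : Matrix p p 𝕜} (hC : IsUnit (z⁻¹ • 1 - C)) (hA : IsUnit (z • 1 - A))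
    (X : Matrix n p 𝕜) (E : Matrix k n 𝕜) (F : Matrix p q 𝕜) :
    E * (z⁻¹ • 1 - C)⁻¹ * (X - C * X * A) * ((z • 1 - A)⁻¹ * F)
      = E * X * F + E * (z⁻¹ • 1 - C)⁻¹ * C * X * F + E * X * A * ((z • 1 - A)⁻¹ * F) := by
  rw [isUnit_iff_isUnit_det] at hC hA
  rw [sub_mul_mul_eq_resolvent_expansion hz]
  simp only [Matrix.mul_add, Matrix.add_mul, Matrix.mul_assoc, nonsing_inv_mul_cancel_left _ _ hC,
    mul_nonsing_inv_cancel_left _ _ hA]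

theorem popov_eq_spectral_factorization {z : 𝕜} (hz : z ≠ 0) {A X Q : Matrix n n 𝕜}
    {B S : Matrix n m 𝕜} {R Rd : Matrix m m 𝕜}
    (hL : IsUnit (z • 1 - A)) (hM : IsUnit (z⁻¹ • 1 - Aᵀ)) (hX : Xᵀ = X) (hR : Rᵀ = R)
    (hGDARE : X = Aᵀ * X * A - (Aᵀ * X * B + S) * Rd * (Aᵀ * X * B + S)ᵀ + Q)
    (hker : (Aᵀ * X * B + S) * (Rdᵀ * (R + Bᵀ * X * B)) = Aᵀ * X * B + S) :
    fromCols (Bᵀ * (z⁻¹ • 1 - Aᵀ)⁻¹) (1 : Matrix m m 𝕜) * fromBlocks Q S Sᵀ R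
        * fromRows ((z • 1 - A)⁻¹ * B) (1 : Matrix m m 𝕜)
      = (1 + Bᵀ * (z⁻¹ • 1 - Aᵀ)⁻¹ * (Rd * (Aᵀ * X * B + S)ᵀ)ᵀ) * (R + Bᵀ * X * B)
        * (1 + Rd * (Aᵀ * X * B + S)ᵀ * (z • 1 - A)⁻¹ * B) := by
  set G := Bᵀ * (z⁻¹ • 1 - Aᵀ)⁻¹
  set F := (z • 1 - A)⁻¹ * B
  set SX := Aᵀ * X * B + S
  set RX := R + Bᵀ * X * B
  set K := Rd * SXᵀ
  have hRX_symm : RXᵀ = RX := by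
    simp only [RX, transpose_add, transpose_mul, transpose_transpose, hR, hX, Matrix.mul_assoc]
  have hSX_transpose : SXᵀ = Bᵀ * X * A + Sᵀ := by
    simp only [SX, transpose_add, transpose_mul, transpose_transpose, hX, Matrix.mul_assoc]
  have hKR : Kᵀ * RX = SX := by
    rw [transpose_mul, transpose_transpose, Matrix.mul_assoc, hker]
  have hRK : RX * K = SXᵀ := by
    simpa only [transpose_mul, transpose_transpose, hRX_symm] using congrArg transpose hKR
  have hQ : Q = (X - Aᵀ * X * A) + SX * Rd * SXᵀ := by
    nth_rw 1 [hGDARE]; abel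
  have hStein := mul_nonsing_inv_mul_sub_mul_mul_nonsing_inv hz hM hL X Bᵀ B
  calc _ = G * (X - Aᵀ * X * A) * F + G * (SX * Rd * SXᵀ) * F + G * S + Sᵀ * F + R := by
        rw [fromCols_mul_fromBlocks, fromCols_mul_fromRows, hQ]
        simp only [Matrix.mul_add, Matrix.add_mul, Matrix.one_mul, Matrix.mul_one]
        abel
    _ = RX + G * SX + SXᵀ * F + G * (SX * Rd * SXᵀ) * F := by
        rw [hStein, hSX_transpose]
        simp only [G, F, RX, SX, Matrix.mul_add, Matrix.add_mul, Matrix.mul_assoc]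
        abel
    _ = RX + G * (Kᵀ * RX) + (RX * K) * F + G * (Kᵀ * RX * K) * F := by
        rw [hKR, hRK]; simp only [K, Matrix.mul_assoc]
    _ = (1 + G * Kᵀ) * RX * (1 + K * (z • 1 - A)⁻¹ * B) := by
        simp only [F, Matrix.mul_add, Matrix.add_mul, Matrix.one_mul, Matrix.mul_one,
          Matrix.mul_assoc, add_assoc]

end PopovFunction

lemma toC_mul {k l o : Type*} [Fintype l] (M : Matrix k l ℝ) (N : Matrix l o ℝ) :
    toC (M * N) = toC M * toC N := Matrix.map_mul

lemma toC_add {k l : Type*} (M N : Matrix k l ℝ) : toC (M + N) = toC M + toC N :=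
  Matrix.map_add _ (map_add _) M N

lemma toC_sub {k l : Type*} (M N : Matrix k l ℝ) : toC (M - N) = toC M - toC N :=
  Matrix.map_sub _ (map_sub _) M N

lemma toC_transpose {k l : Type*} (M : Matrix k l ℝ) : toC Mᵀ = (toC M)ᵀ :=
  Matrix.transpose_map

theorem stmt_19_general (n m : ℕ)
    (A : Matrix (Fin n) (Fin n) ℝ) (B : Matrix (Fin n) (Fin m) ℝ)
    (Q : Matrix (Fin n) (Fin n) ℝ) (S : Matrix (Fin n) (Fin m) ℝ)
    (R : Matrix (Fin m) (Fin m) ℝ)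
    (hR : Rᵀ = R)
    (X : Matrix (Fin n) (Fin n) ℝ) (hX : Xᵀ = X)
    (RXd : Matrix (Fin m) (Fin m) ℝ)
    (pen1 : (R + Bᵀ * X * B) * RXd * (R + Bᵀ * X * B) = R + Bᵀ * X * B)
    (hGDARE : X = Aᵀ * X * A - (Aᵀ * X * B + S) * RXd * (Aᵀ * X * B + S)ᵀ + Q)
    (hker : ∀ v : Fin m → ℝ, (R + Bᵀ * X * B).mulVec v = 0 → (Aᵀ * X * B + S).mulVec v = 0) :
    ∀ z : ℂ, z ≠ 0 →
      IsUnit (z • (1 : Matrix (Fin n) (Fin n) ℂ) - toC A) →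
      IsUnit (z⁻¹ • (1 : Matrix (Fin n) (Fin n) ℂ) - toC Aᵀ) →
      fromCols (toC Bᵀ * (z⁻¹ • (1 : Matrix (Fin n) (Fin n) ℂ) - toC Aᵀ)⁻¹)
          (1 : Matrix (Fin m) (Fin m) ℂ)
        * fromBlocks (toC Q) (toC S) (toC Sᵀ) (toC R)
        * fromRows ((z • (1 : Matrix (Fin n) (Fin n) ℂ) - toC A)⁻¹ * toC B)
            (1 : Matrix (Fin m) (Fin m) ℂ)
      = ((1 : Matrix (Fin m) (Fin m) ℂ)
            + toC Bᵀ * (z⁻¹ • (1 : Matrix (Fin n) (Fin n) ℂ) - toC Aᵀ)⁻¹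
              * toC (RXd * (Aᵀ * X * B + S)ᵀ)ᵀ)
          * toC (R + Bᵀ * X * B)
          * ((1 : Matrix (Fin m) (Fin m) ℂ)
            + toC (RXd * (Aᵀ * X * B + S)ᵀ)
              * (z • (1 : Matrix (Fin n) (Fin n) ℂ) - toC A)⁻¹ * toC B) := by
  intro z hz hL hM
  have hRX_symm : (R + Bᵀ * X * B)ᵀ = R + Bᵀ * X * B := by
    simp only [transpose_add, transpose_mul, transpose_transpose, hR, hX, Matrix.mul_assoc]
  have hRXd_inner : (R + Bᵀ * X * B) * RXdᵀ * (R + Bᵀ * X * B) = R + Bᵀ * X * B := by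
    have h := congrArg transpose pen1
    rwa [transpose_mul, transpose_mul, hRX_symm, ← Matrix.mul_assoc] at h
  have hker_C := congrArg toC (mul_mul_eq_self_of_ker_le hRXd_inner hker)
  have hGDARE_C := congrArg toC hGDARE
  have hX_C : (toC X)ᵀ = toC X := by rw [← toC_transpose, hX]
  have hR_C : (toC R)ᵀ = toC R := by rw [← toC_transpose, hR]
  simp only [toC_add, toC_sub, toC_mul, toC_transpose] at hker_C hGDARE_C hM ⊢
  exact popov_eq_spectral_factorization hz hL hM hX_C hR_C hGDARE_C hker_C

theorem stmt_19 (n m : ℕ)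
    (A : Matrix (Fin n) (Fin n) ℝ) (B : Matrix (Fin n) (Fin m) ℝ)
    (Q : Matrix (Fin n) (Fin n) ℝ) (S : Matrix (Fin n) (Fin m) ℝ)
    (R : Matrix (Fin m) (Fin m) ℝ)
    (hQ : Qᵀ = Q) (hR : Rᵀ = R)
    (X : Matrix (Fin n) (Fin n) ℝ) (hX : Xᵀ = X)
    (RXd : Matrix (Fin m) (Fin m) ℝ)
    (pen1 : (R + Bᵀ * X * B) * RXd * (R + Bᵀ * X * B) = R + Bᵀ * X * B)
    (pen2 : RXd * (R + Bᵀ * X * B) * RXd = RXd)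
    (pen3 : ((R + Bᵀ * X * B) * RXd)ᵀ = (R + Bᵀ * X * B) * RXd)
    (pen4 : (RXd * (R + Bᵀ * X * B))ᵀ = RXd * (R + Bᵀ * X * B))
    (hGDARE : X = Aᵀ * X * A - (Aᵀ * X * B + S) * RXd * (Aᵀ * X * B + S)ᵀ + Q)
    (hker : ∀ v : Fin m → ℝ, (R + Bᵀ * X * B).mulVec v = 0 → (Aᵀ * X * B + S).mulVec v = 0) :
    ∀ z : ℂ, z ≠ 0 →
      IsUnit (z • (1 : Matrix (Fin n) (Fin n) ℂ) - toC A) →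
      IsUnit (z⁻¹ • (1 : Matrix (Fin n) (Fin n) ℂ) - toC Aᵀ) →
      fromCols (toC Bᵀ * (z⁻¹ • (1 : Matrix (Fin n) (Fin n) ℂ) - toC Aᵀ)⁻¹)
          (1 : Matrix (Fin m) (Fin m) ℂ)
        * fromBlocks (toC Q) (toC S) (toC Sᵀ) (toC R)
        * fromRows ((z • (1 : Matrix (Fin n) (Fin n) ℂ) - toC A)⁻¹ * toC B)
            (1 : Matrix (Fin m) (Fin m) ℂ)
      = ((1 : Matrix (Fin m) (Fin m) ℂ)
            + toC Bᵀ * (z⁻¹ • (1 : Matrix (Fin n) (Fin n) ℂ) - toC Aᵀ)⁻¹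
              * toC (RXd * (Aᵀ * X * B + S)ᵀ)ᵀ)
          * toC (R + Bᵀ * X * B)
          * ((1 : Matrix (Fin m) (Fin m) ℂ)
            + toC (RXd * (Aᵀ * X * B + S)ᵀ)
              * (z • (1 : Matrix (Fin n) (Fin n) ℂ) - toC A)⁻¹ * toC B) :=
  stmt_19_general n m A B Q S R hR X hX RXd pen1 hGDARE hker
end
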